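/- arXiv:2309.06362 — 4 statements merged into one kernel-verified Lean document; each statement's English description precedes it below -/
import Mathlib

section
/- Let G be a finite group in which every element has prime power order (an EPPO-group), let d > 1 be a natural number, and let H be a subgroup of G with gcd(|H|, d) = 1. Then |H| divides the number of elements of order d in G. -/
/-!
A subgroup `H` acts on the elements of order `d` by conjugation, and the action is free: if
`h ∈ H` fixes `g`, then `h` and `g` commute and have coprime orders, so `h * g` has order
`orderOf h * d`. In an EPPO-group this product is a prime power, and a prime power cannot split
into two coprime factors different from `1`; as `d ≠ 1`, `h = 1`. Hence the elements of
order `d` fall into `H`-orbits of size `|H|`.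
-/

theorem Nat.Coprime.eq_one_or_eq_one_of_isPrimePow_mul {a b : ℕ} (hab : a.Coprime b)
    (h : IsPrimePow (a * b)) : a = 1 ∨ b = 1 := by
  have hpos : 0 < a * b := h.pos
  rcases (hab.isPrimePow_dvd_mul h).mp dvd_rfl with hdvd | hdvd
  · exact .inr <| Nat.dvd_one.mp <|
      (Nat.mul_dvd_mul_iff_left (Nat.pos_of_mul_pos_right hpos)).mp (by rwa [mul_one])
  · exact .inl <| Nat.dvd_one.mp <|
      (Nat.mul_dvd_mul_iff_right (Nat.pos_of_mul_pos_left hpos)).mp (by rwa [one_mul])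

theorem eq_one_or_eq_one_of_commute_of_coprime_orderOf {G : Type*} [Group G]
    (hEPPO : ∀ g : G, g ≠ 1 → IsPrimePow (orderOf g)) {a b : G} (hab : Commute a b)
    (hcop : (orderOf a).Coprime (orderOf b)) : a = 1 ∨ b = 1 := by
  have hmul : orderOf (a * b) = orderOf a * orderOf b :=
    hab.orderOf_mul_eq_mul_orderOf_of_coprime hcop
  by_cases hab1 : a * b = 1
  · rw [hab1, orderOf_one, eq_comm] at hmul
    exact .inl (orderOf_eq_one_iff.mp (Nat.eq_one_of_mul_eq_one_right hmul))
  · simpa only [orderOf_eq_one_iff] using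
      hcop.eq_one_or_eq_one_of_isPrimePow_mul (hmul ▸ hEPPO _ hab1)

theorem MulAction.natCard_dvd_natCard_of_stabilizer_eq_bot {H X : Type*} [Group H]
    [MulAction H X] (h : ∀ x : X, stabilizer H x = ⊥) : Nat.card H ∣ Nat.card X := by
  rw [Nat.card_congr (selfEquivOrbitsQuotientProd h), Nat.card_prod]
  exact dvd_mul_left _ _

instance Subgroup.conjActionOrderOf {G : Type*} [Group G] (H : Subgroup G) (d : ℕ) :
    MulAction H {g : G // orderOf g = d} where
  smul h g := ⟨MulAut.conj (h : G) g, (MulEquiv.orderOf_eq _ _).trans g.2⟩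
  one_smul g := Subtype.ext (by change MulAut.conj _ _ = _; simp)
  mul_smul h k g := Subtype.ext (by change MulAut.conj _ _ = MulAut.conj _ (MulAut.conj _ _); simp)

theorem Subgroup.commute_of_mem_stabilizer_conjActionOrderOf {G : Type*} [Group G]
    {H : Subgroup G} {d : ℕ} {g : {g : G // orderOf g = d}} {h : H}
    (hh : h ∈ MulAction.stabilizer H g) : Commute (h : G) g :=
  mul_inv_eq_iff_eq_mul.mp (congrArg Subtype.val hh)

theorem EPPO_divisibility_general (G : Type*) [Group G]
    (hEPPO : ∀ g : G, g ≠ 1 → IsPrimePow (orderOf g))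
    (d : ℕ) (hd : 1 < d) (H : Subgroup G) (hcop : Nat.Coprime (Nat.card H) d) :
    Nat.card H ∣ Nat.card {g : G // orderOf g = d} := by
  refine MulAction.natCard_dvd_natCard_of_stabilizer_eq_bot fun g => ?_
  refine (Subgroup.eq_bot_iff_forall _).mpr fun h hh => ?_
  have hcop' : (orderOf (h : G)).Coprime (orderOf (g : G)) := by
    rw [g.2, Subgroup.orderOf_coe]
    exact hcop.coprime_dvd_left (orderOf_dvd_natCard h)
  rcases eq_one_or_eq_one_of_commute_of_coprime_orderOf hEPPO
    (Subgroup.commute_of_mem_stabilizer_conjActionOrderOf hh) hcop' with h1 | g1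
  · exact Subtype.ext h1
  · exact absurd (g.2.symm.trans (orderOf_eq_one_iff.mpr g1)) hd.ne'

theorem EPPO_divisibility (G : Type*) [Group G] [Finite G]
    (hEPPO : ∀ g : G, g ≠ 1 → IsPrimePow (orderOf g))
    (d : ℕ) (hd : 1 < d) (H : Subgroup G) (hcop : Nat.Coprime (Nat.card H) d) :
    Nat.card H ∣ Nat.card {g : G // orderOf g = d} :=
  EPPO_divisibility_general G hEPPO d hd H hcop
end

section
/- Let G be a finite group and suppose that for every subgroup H of G and every d ∈ π_e(G) with d ≠ 1 and gcd(|H|, d) = 1, the order of H divides the number of elements of order d in G. Then every element of G has prime power order. -/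
/-
Suppose `x` has order divisible by two distinct primes `p` and `q`, and let `P`, `Q` be the
`p`- and `q`-parts of `N = |G|`. Put `A = #{g | g ^ (N / P) = 1}`, `B = #{g | g ^ (N / Q) = 1}`
and `C = #{g | g ^ gcd (N / P) (N / Q) = 1}`, so that the elements `g` with `g ^ (N / P) = 1` or
`g ^ (N / Q) = 1` number `U = A + B - C`. Grouping the elements by their order, the hypothesis
applied to a Sylow `p`-subgroup gives `A ≡ C ≡ 1 [MOD P]`, while Frobenius' theorem gives
`P ∣ N / Q ∣ B`; hence `P ∣ U`, and likewise `Q ∣ U`. Frobenius' theorem also gives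
`gcd (N / P) (N / Q) ∣ A, B, C`, so `N ∣ U`. But `0 < U < N`, since `1` is counted and `x` is not.
-/

/-- The set of element orders (spectrum) of a group. -/
def elementOrders (G : Type*) [Group G] : Set ℕ := {n : ℕ | ∃ g : G, orderOf g = n}

open Finset MulAction Subgroup

theorem Nat.ordProj_mul_gcd_ordCompl_ordCompl {n p q : ℕ} (hp : p.Prime) (hq : q.Prime)
    (hpq : p ≠ q) : ordProj[p] n * (ordCompl[p] n).gcd (ordCompl[q] n) = ordCompl[q] n :=
  calc ordProj[p] n * (ordCompl[p] n).gcd (ordCompl[q] n)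
      = (ordProj[p] n * ordCompl[p] n).gcd (ordProj[p] n * ordCompl[q] n) :=
        (Nat.gcd_mul_left _ _ _).symm
    _ = (ordProj[q] n * ordCompl[q] n).gcd (ordProj[p] n * ordCompl[q] n) := by
        rw [Nat.ordProj_mul_ordCompl_eq_self n p, Nat.ordProj_mul_ordCompl_eq_self n q]
    _ = ordCompl[q] n := by
        rw [Nat.gcd_mul_right, ((Nat.coprime_primes hq hp).mpr hpq.symm).pow _ _, one_mul]

theorem Nat.exists_primes_mul_dvd_of_not_isPrimePow {n : ℕ} (hn : n ≠ 1) (h : ¬IsPrimePow n) :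
    ∃ p q, p.Prime ∧ q.Prime ∧ p ≠ q ∧ p * q ∣ n := by
  have hp := Nat.minFac_prime hn
  obtain ⟨q, ⟨hq, hqn⟩, hqp⟩ : ∃ q, (q.Prime ∧ q ∣ n) ∧ q ≠ n.minFac := by
    by_contra! H
    exact h (isPrimePow_iff_unique_prime_dvd.mpr ⟨n.minFac, ⟨hp, minFac_dvd n⟩, H⟩)
  exact ⟨n.minFac, q, hp, hq, hqp.symm,
    ((coprime_primes hp hq).mpr hqp.symm).mul_dvd_of_dvd_of_dvd (minFac_dvd n) hqn⟩

section Frobenius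

variable {G : Type*} [Group G]

theorem card_eq_sum_card_commute_pow_eq_one [Fintype G] {n n' : ℕ} (hco : n.Coprime n')
    (hexp : ∀ g : G, g ^ (n * n') = 1) :
    Nat.card G = ∑ v : G, Nat.card {x : G // x ^ n = 1 ∧ v ^ n' = 1 ∧ Commute x v} := by
  obtain ⟨c₁, hc₁n, hc₁n'⟩ : ∃ c, c ≡ 1 [MOD n] ∧ c ≡ 0 [MOD n'] :=
    ⟨_, (Nat.chineseRemainder hco 1 0).2⟩
  obtain ⟨c₂, hc₂n, hc₂n'⟩ : ∃ c, c ≡ 0 [MOD n] ∧ c ≡ 1 [MOD n'] :=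
    ⟨_, (Nat.chineseRemainder hco 0 1).2⟩
  have hsplit (g : G) : g ^ c₁ * g ^ c₂ = g := by
    refine (pow_add g c₁ c₂).symm.trans ((pow_eq_pow_of_modEq ?_ (hexp g)).trans (pow_one g))
    exact (Nat.modEq_and_modEq_iff_modEq_mul hco).mp
      ⟨by simpa using hc₁n.add hc₂n, by simpa using hc₁n'.add hc₂n'⟩
  have hpow₁ (g : G) : (g ^ c₁) ^ n = 1 := by
    rw [← pow_mul, pow_eq_pow_of_modEq (b := 0) ?_ (hexp g), pow_zero]
    simpa [mul_comm n n'] using hc₁n'.mul_right' n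
  have hpow₂ (g : G) : (g ^ c₂) ^ n' = 1 := by
    rw [← pow_mul, pow_eq_pow_of_modEq (b := 0) ?_ (hexp g), pow_zero]
    simpa using hc₂n.mul_right' n'
  have hproj {x v : G} (hx : x ^ n = 1) (hv : v ^ n' = 1) (hxv : Commute x v) :
      (x * v) ^ c₁ = x ∧ (x * v) ^ c₂ = v := by
    simp only [hxv.mul_pow, pow_eq_pow_of_modEq hc₁n hx, pow_eq_pow_of_modEq hc₁n' hv,
      pow_eq_pow_of_modEq hc₂n hx, pow_eq_pow_of_modEq hc₂n' hv, pow_one, pow_zero, mul_one,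
      one_mul, and_self]
  rw [← Nat.card_sigma]
  refine Nat.card_congr
    { toFun := fun g => ⟨g ^ c₂, g ^ c₁, hpow₁ g, hpow₂ g, Commute.pow_pow_self g c₁ c₂⟩
      invFun := fun xv => xv.2.1 * xv.1
      left_inv := hsplit
      right_inv := fun ⟨v, x, hx, hv, hxv⟩ =>
        Sigma.subtype_ext (hproj hx hv hxv).2 (hproj hx hv hxv).1 }

theorem card_commute_pow_eq_one_conj (n n' : ℕ) (g v : G) :
    Nat.card {x : G // x ^ n = 1 ∧ (g * v * g⁻¹) ^ n' = 1 ∧ Commute x (g * v * g⁻¹)} =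
      Nat.card {x : G // x ^ n = 1 ∧ v ^ n' = 1 ∧ Commute x v} :=
  Nat.card_congr ((MulAut.conj g).toEquiv.subtypeEquiv (by simp [conj_pow, Commute.conj_iff])).symm

theorem dvd_sum_of_dvd_ncard_orbit_mul {M α : Type*} [Group M] [MulAction M α] [Fintype α]
    {k : ℕ} (f : α → ℕ) (hf : ∀ (g : M) (x : α), f (g • x) = f x)
    (hk : ∀ x, k ∣ (orbit M x).ncard * f x) : k ∣ ∑ x, f x := by
  classical
  rw [← sum_fiberwise univ (Quotient.mk (orbitRel M α)) f]
  refine dvd_sum fun ω _ => ?_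
  induction ω using Quotient.inductionOn with
  | h x =>
    have hfib : ∀ y ∈ ({y | Quotient.mk (orbitRel M α) y = ⟦x⟧} : Finset α), f y = f x := by
      intro y hy
      obtain ⟨g, rfl⟩ := Quotient.exact (mem_filter.mp hy).2
      exact hf g x
    have horbit : (({y | Quotient.mk (orbitRel M α) y = ⟦x⟧} : Finset α) : Set α) = orbit M x := by
      ext y
      simp [Quotient.eq, orbitRel_apply]
    rw [sum_congr rfl hfib, sum_const, smul_eq_mul, ← Set.ncard_coe_finset, horbit]
    exact hk x

theorem ncard_orbit_conjAct_mul_card_centralizer (v : G) :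
    (orbit (ConjAct G) v).ncard * Nat.card (centralizer {v}) = Nat.card G := by
  rw [nat_card_centralizer_nat_card_stabilizer, ← index_stabilizer, index_mul_card]
  exact Nat.card_congr ConjAct.ofConjAct.toEquiv

theorem conj_mem_center_iff (g v : G) : g * v * g⁻¹ ∈ center G ↔ v ∈ center G :=
  ⟨fun h => by simpa [mul_assoc] using (center G).normal_of_characteristic.conj_mem _ h g⁻¹,
    fun h => (center G).normal_of_characteristic.conj_mem _ h g⟩

theorem coprime_card_of_forall_pow_eq_one [Finite G] {n n' : ℕ} (hco : n.Coprime n')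
    (h : ∀ g : G, g ^ n' = 1) : (Nat.card G).Coprime n := by
  refine Nat.coprime_of_dvd fun r hr hrG hrn => ?_
  have := Fact.mk hr
  obtain ⟨g, hg⟩ := exists_prime_orderOf_dvd_card' r hrG
  exact hr.one_lt.ne' (Nat.eq_one_of_dvd_coprimes hco hrn (hg ▸ orderOf_dvd_of_pow_eq_one (h g)))

theorem coprime_card_center_pow_eq_one [Finite G] {n n' : ℕ} (hco : n.Coprime n') :
    (Nat.card {z : G // z ∈ center G ∧ z ^ n' = 1}).Coprime n := by
  let Z : Subgroup G :=
    { carrier := {z | z ∈ center G ∧ z ^ n' = 1}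
      mul_mem' := fun ha hb => ⟨mul_mem ha.1 hb.1, by
        rw [(Commute.symm (mem_center_iff.mp ha.1 _)).mul_pow, ha.2, hb.2, one_mul]⟩
      one_mem' := ⟨one_mem _, one_pow _⟩
      inv_mem' := fun ha => ⟨inv_mem ha.1, by rw [inv_pow, ha.2, inv_one]⟩ }
  exact coprime_card_of_forall_pow_eq_one (G := Z) hco fun z => Subtype.ext z.2.2

open scoped Classical in
theorem sum_center_card_commute_pow_eq_one [Fintype G] (n n' : ℕ) :
    ∑ v ∈ univ with v ∈ center G, Nat.card {x : G // x ^ n = 1 ∧ v ^ n' = 1 ∧ Commute x v} =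
      Nat.card {z : G // z ∈ center G ∧ z ^ n' = 1} * {g : G | g ^ n = 1}.ncard := by
  calc ∑ v ∈ univ with v ∈ center G, Nat.card {x : G // x ^ n = 1 ∧ v ^ n' = 1 ∧ Commute x v}
      = ∑ v ∈ univ with v ∈ center G, if v ^ n' = 1 then {g : G | g ^ n = 1}.ncard else 0 := by
        refine sum_congr rfl fun v hv => ?_
        have hv (x : G) : Commute x v := mem_center_iff.mp (mem_filter.mp hv).2 x
        rw [← Nat.card_coe_set_eq]
        split_ifs with hvn
        · simp only [hvn, hv, and_true, Set.coe_ofPred]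
        · simp only [hvn, false_and, and_false, Nat.card_of_isEmpty]
    _ = Nat.card {z : G // z ∈ center G ∧ z ^ n' = 1} * {g : G | g ^ n = 1}.ncard := by
        rw [sum_ite, sum_const_zero, add_zero, sum_const, smul_eq_mul, filter_filter,
          ← Fintype.card_subtype, ← Nat.card_eq_fintype_card]

theorem dvd_ncard_orbit_mul_card_commute_pow_eq_one [Finite G] {n n' : ℕ}
    (hG : Nat.card G = n * n') (hco : n.Coprime n')
    (ih : ∀ K : Subgroup G, Nat.card K < Nat.card G → ∀ m m' : ℕ, Nat.card K = m * m' →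
      m.Coprime m' → m ∣ {x : K | x ^ m = 1}.ncard)
    {v : G} (hv : v ∉ center G) :
    n ∣ (orbit (ConjAct G) v).ncard * Nat.card {x : G // x ^ n = 1 ∧ v ^ n' = 1 ∧ Commute x v} := by
  by_cases hvn : v ^ n' = 1
  swap
  · simp [hvn]
  set C := centralizer {v}
  have hCG : Nat.card C < Nat.card G := lt_of_not_ge fun h =>
    hv (centralizer_eq_top_iff_subset.mp (eq_top_of_le_card C h) rfl)
  set m := (Nat.card C).gcd n
  set m' := (Nat.card C).gcd n'
  have hCm : Nat.card C = m * m' :=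
    ((Nat.gcd_mul_gcd_eq_iff_dvd_mul_of_coprime hco).mpr (hG ▸ card_subgroup_dvd_card C)).symm
  have hmm' : m.Coprime m' :=
    (hco.coprime_dvd_left (Nat.gcd_dvd_right _ _)).coprime_dvd_right (Nat.gcd_dvd_right _ _)
  have hcount : {x : C | x ^ m = 1}.ncard =
      Nat.card {x : G // x ^ n = 1 ∧ v ^ n' = 1 ∧ Commute x v} := by
    rw [← Nat.card_coe_set_eq]
    refine Nat.card_congr ((Equiv.subtypeEquivRight fun x : C => ?_).trans
      ((Equiv.subtypeSubtypeEquivSubtypeInter (· ∈ C) (fun x : G => x ^ n = 1)).trans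
        (Equiv.subtypeEquivRight fun x => ?_)))
    · rw [Set.mem_ofPred_eq, pow_gcd_eq_one, pow_card_eq_one', eq_self, true_and]
      norm_cast
    · simp [C, mem_centralizer_singleton_iff, hvn, and_comm, Commute, SemiconjBy]
  have hindex : n ∣ (orbit (ConjAct G) v).ncard * m := by
    refine Nat.dvd_of_mul_dvd_mul_right (Nat.pos_of_ne_zero fun h => ?_) ?_ (k := m')
    · exact Nat.card_pos.ne' (hCm.trans (by rw [h, mul_zero]))
    · rw [mul_assoc, ← hCm, ncard_orbit_conjAct_mul_card_centralizer, hG]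
      exact mul_dvd_mul_left n (Nat.gcd_dvd_right _ _)
  rw [← hcount]
  exact hindex.trans (mul_dvd_mul_left _ (ih C hCG m m' hCm hmm'))

open scoped Classical in
theorem dvd_sum_noncenter_card_commute_pow_eq_one [Fintype G] {n n' : ℕ}
    (hG : Nat.card G = n * n') (hco : n.Coprime n')
    (ih : ∀ K : Subgroup G, Nat.card K < Nat.card G → ∀ m m' : ℕ, Nat.card K = m * m' →
      m.Coprime m' → m ∣ {x : K | x ^ m = 1}.ncard) :
    n ∣ ∑ v ∈ univ with v ∉ center G, Nat.card {x : G // x ^ n = 1 ∧ v ^ n' = 1 ∧ Commute x v} := by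
  rw [sum_filter]
  refine dvd_sum_of_dvd_ncard_orbit_mul (M := ConjAct G) _ (fun g v => ?_) fun v => ?_
  · simp only [ConjAct.smul_def, card_commute_pow_eq_one_conj, conj_mem_center_iff]
  · split_ifs with hv
    · simp
    · exact dvd_ncard_orbit_mul_card_commute_pow_eq_one hG hco ih hv

/-- **Frobenius' theorem** for a Hall divisor `n` of `|G|`. Writing each element uniquely as a
commuting product of an `n`-element and an `n'`-element `v`, the elements with a given
non-central `v` are counted, over the conjugacy class of `v`, by a multiple of `n` (induction on
the centralizer of `v`); the central `v` contribute a number prime to `n` times the count. -/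
theorem dvd_ncard_pow_eq_one_of_coprime [Finite G] {n n' : ℕ} (hG : Nat.card G = n * n')
    (hco : n.Coprime n') : n ∣ {g : G | g ^ n = 1}.ncard := by
  induction hN : Nat.card G using Nat.strong_induction_on generalizing G n n' with
  | _ N ih =>
  classical
  have := Fintype.ofFinite G
  have hsum := card_eq_sum_card_commute_pow_eq_one hco fun g => hG ▸ pow_card_eq_one'
  rw [← sum_filter_add_sum_filter_not univ (· ∈ center G),
    sum_center_card_commute_pow_eq_one] at hsum
  have hnoncenter := dvd_sum_noncenter_card_commute_pow_eq_one hG hco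
    fun K hK _ _ hKm hmm' => ih _ (hN ▸ hK) hKm hmm' rfl
  refine (coprime_card_center_pow_eq_one (G := G) hco).symm.dvd_of_dvd_mul_left ?_
  rw [← Nat.dvd_add_left hnoncenter, ← hsum, hG]
  exact dvd_mul_right n n'

end Frobenius

section

variable {G : Type*} [Group G] [Finite G]

theorem ncard_pow_eq_one_modEq_one {m k : ℕ} (hk : k ≠ 0)
    (h : ∀ d, d ∣ k → d ≠ 1 → m ∣ Nat.card {g : G // orderOf g = d}) :
    {g : G | g ^ k = 1}.ncard ≡ 1 [MOD m] := by
  have := Fintype.ofFinite G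
  have := Classical.decEq G
  have hone : #{x : G | orderOf x = 1} = 1 := by
    simp only [orderOf_eq_one_iff, filter_eq', mem_univ, if_true, card_singleton]
  rw [Set.ncard_eq_toFinset_card', Set.toFinset_ofPred, ← sum_card_orderOf_eq_card_pow_eq_one hk,
    ← add_sum_erase _ _ (Nat.one_mem_divisors.mpr hk), hone]
  refine Nat.ModEq.add_left 1 (Nat.modEq_zero_iff_dvd.mpr (dvd_sum fun d hd => ?_))
  obtain ⟨hd1, hdk⟩ := mem_erase.mp hd
  simpa [Fintype.card_subtype] using h d (Nat.dvd_of_mem_divisors hdk) hd1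

theorem ncard_pow_eq_one_modEq_card_subgroup (H : Subgroup G)
    (hH : ∀ d ∈ elementOrders G, d ≠ 1 → (Nat.card H).Coprime d →
      Nat.card H ∣ Nat.card {g : G // orderOf g = d})
    {k : ℕ} (hk : k ≠ 0) (hHk : (Nat.card H).Coprime k) :
    {g : G | g ^ k = 1}.ncard ≡ 1 [MOD Nat.card H] :=
  ncard_pow_eq_one_modEq_one hk fun d hdk hd1 => by
    rcases isEmpty_or_nonempty {g : G // orderOf g = d} with hd | ⟨⟨g, hg⟩⟩
    · simp
    · exact hH d ⟨g, hg⟩ hd1 (hHk.coprime_dvd_right hdk)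

theorem ncard_pow_eq_one_or_add_ncard_pow_gcd_eq_one (a b : ℕ) :
    {g : G | g ^ a = 1 ∨ g ^ b = 1}.ncard + {g : G | g ^ a.gcd b = 1}.ncard =
      {g : G | g ^ a = 1}.ncard + {g : G | g ^ b = 1}.ncard := by
  simp_rw [pow_gcd_eq_one]
  exact Set.ncard_union_add_ncard_inter _ _

theorem ordProj_dvd_ncard_pow_ordCompl_eq_one_or
    (h : ∀ (H : Subgroup G) (d : ℕ), d ∈ elementOrders G → d ≠ 1 →
      Nat.Coprime (Nat.card H) d → Nat.card H ∣ Nat.card {g : G // orderOf g = d})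
    {p q : ℕ} (hp : p.Prime) (hq : q.Prime) (hpq : p ≠ q) :
    ordProj[p] (Nat.card G) ∣
      {g : G | g ^ ordCompl[p] (Nat.card G) = 1 ∨ g ^ ordCompl[q] (Nat.card G) = 1}.ncard := by
  set N := Nat.card G
  have hN : N ≠ 0 := Nat.card_pos.ne'
  have hPN₁ : (ordProj[p] N).Coprime (ordCompl[p] N) := (Nat.coprime_ordCompl hp hN).pow_left _
  have hQN₂ : (ordProj[q] N).Coprime (ordCompl[q] N) := (Nat.coprime_ordCompl hq hN).pow_left _
  have hB : ordProj[p] N ∣ {g : G | g ^ ordCompl[q] N = 1}.ncard :=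
    (Dvd.intro _ (Nat.ordProj_mul_gcd_ordCompl_ordCompl hp hq hpq)).trans
      (dvd_ncard_pow_eq_one_of_coprime (by rw [mul_comm, Nat.ordProj_mul_ordCompl_eq_self])
        hQN₂.symm)
  have := Fact.mk hp
  obtain ⟨S⟩ : Nonempty (Sylow p G) := inferInstance
  have hS : Nat.card S = ordProj[p] N := S.card_eq_multiplicity
  have hmod {k : ℕ} (hk : k ∣ ordCompl[p] N) :
      {g : G | g ^ k = 1}.ncard ≡ 1 [MOD ordProj[p] N] := by
    rw [← hS]
    refine ncard_pow_eq_one_modEq_card_subgroup (S : Subgroup G) (h S) ?_ ?_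
    · rintro rfl
      exact (Nat.ordCompl_pos p hN).ne' (Nat.eq_zero_of_zero_dvd hk)
    · rw [hS]
      exact hPN₁.coprime_dvd_right hk
  have hA := hmod (dvd_refl (ordCompl[p] N))
  have hC := hmod (Nat.gcd_dvd_left (ordCompl[p] N) (ordCompl[q] N))
  set U := {g : G | g ^ ordCompl[p] N = 1 ∨ g ^ ordCompl[q] N = 1}.ncard
  refine (Nat.modEq_zero_iff_dvd).mp (Nat.ModEq.add_right_cancel' 1 ?_)
  calc U + 1 ≡ U + {g : G | g ^ (ordCompl[p] N).gcd (ordCompl[q] N) = 1}.ncard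
        [MOD ordProj[p] N] := Nat.ModEq.add_left U hC.symm
    _ = {g : G | g ^ ordCompl[p] N = 1}.ncard + {g : G | g ^ ordCompl[q] N = 1}.ncard :=
        ncard_pow_eq_one_or_add_ncard_pow_gcd_eq_one _ _
    _ ≡ 1 + 0 [MOD ordProj[p] N] := hA.add (Nat.modEq_zero_iff_dvd.mpr hB)

theorem gcd_ordCompl_dvd_ncard_pow_ordCompl_eq_one_or {p q : ℕ} (hp : p.Prime) (hq : q.Prime)
    (hpq : p ≠ q) :
    (ordCompl[p] (Nat.card G)).gcd (ordCompl[q] (Nat.card G)) ∣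
      {g : G | g ^ ordCompl[p] (Nat.card G) = 1 ∨ g ^ ordCompl[q] (Nat.card G) = 1}.ncard := by
  set N := Nat.card G
  have hN : N ≠ 0 := Nat.card_pos.ne'
  set R := (ordCompl[p] N).gcd (ordCompl[q] N)
  have hPN₁ : (ordProj[p] N).Coprime (ordCompl[p] N) := (Nat.coprime_ordCompl hp hN).pow_left _
  have hQN₂ : (ordProj[q] N).Coprime (ordCompl[q] N) := (Nat.coprime_ordCompl hq hN).pow_left _
  have hRN₁ : R ∣ ordCompl[p] N := Nat.gcd_dvd_left _ _
  have hRN₂ : R ∣ ordCompl[q] N := Nat.gcd_dvd_right _ _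
  have hA := hRN₁.trans (dvd_ncard_pow_eq_one_of_coprime
    (by rw [mul_comm, Nat.ordProj_mul_ordCompl_eq_self]) hPN₁.symm)
  have hB := hRN₂.trans (dvd_ncard_pow_eq_one_of_coprime
    (by rw [mul_comm, Nat.ordProj_mul_ordCompl_eq_self]) hQN₂.symm)
  have hQR : ordProj[q] N * R = ordCompl[p] N := by
    rw [show R = _ from Nat.gcd_comm _ _]
    exact Nat.ordProj_mul_gcd_ordCompl_ordCompl hq hp hpq.symm
  have hC := dvd_ncard_pow_eq_one_of_coprime (G := G) (n' := ordProj[p] N * ordProj[q] N)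
    (by rw [mul_left_comm, mul_comm R, hQR, Nat.ordProj_mul_ordCompl_eq_self])
    (Nat.Coprime.mul_right (hPN₁.symm.coprime_dvd_left hRN₁) (hQN₂.symm.coprime_dvd_left hRN₂))
  have hsum := ncard_pow_eq_one_or_add_ncard_pow_gcd_eq_one (G := G) (ordCompl[p] N) (ordCompl[q] N)
  exact (Nat.dvd_add_left hC).mp (hsum ▸ dvd_add hA hB)

theorem not_mul_dvd_orderOf
    (h : ∀ (H : Subgroup G) (d : ℕ), d ∈ elementOrders G → d ≠ 1 →
      Nat.Coprime (Nat.card H) d → Nat.card H ∣ Nat.card {g : G // orderOf g = d})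
    {p q : ℕ} (hp : p.Prime) (hq : q.Prime) (hpq : p ≠ q) (x : G) : ¬ p * q ∣ orderOf x := by
  intro hx
  set N := Nat.card G
  have hN : N ≠ 0 := Nat.card_pos.ne'
  set U := {g : G | g ^ ordCompl[p] N = 1 ∨ g ^ ordCompl[q] N = 1}
  have hPU : ordProj[p] N ∣ U.ncard := ordProj_dvd_ncard_pow_ordCompl_eq_one_or h hp hq hpq
  have hQU : ordProj[q] N ∣ U.ncard := by
    simpa only [U, or_comm] using ordProj_dvd_ncard_pow_ordCompl_eq_one_or h hq hp hpq.symm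
  have hRU := gcd_ordCompl_dvd_ncard_pow_ordCompl_eq_one_or (G := G) hp hq hpq
  have hNU : N ∣ U.ncard := by
    have hQR : ordProj[q] N * (ordCompl[p] N).gcd (ordCompl[q] N) = ordCompl[p] N := by
      rw [Nat.gcd_comm]
      exact Nat.ordProj_mul_gcd_ordCompl_ordCompl hq hp hpq.symm
    have hQR_coprime : (ordProj[q] N).Coprime ((ordCompl[p] N).gcd (ordCompl[q] N)) :=
      ((Nat.coprime_ordCompl hq hN).pow_left _).coprime_dvd_right (Nat.gcd_dvd_right _ _)
    have := ((Nat.coprime_ordCompl hp hN).pow_left _).mul_dvd_of_dvd_of_dvd hPU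
      (hQR ▸ hQR_coprime.mul_dvd_of_dvd_of_dvd hQU hRU)
    rwa [Nat.ordProj_mul_ordCompl_eq_self] at this
  have hUpos : 0 < U.ncard := (Set.ncard_pos (Set.toFinite U)).mpr ⟨1, by simp [U]⟩
  have hUlt : U.ncard < N := by
    refine Set.ncard_lt_card fun hU => ?_
    rcases hU ▸ Set.mem_univ x with hx' | hx'
    · exact Nat.not_dvd_ordCompl hp hN
        ((Dvd.intro _ rfl).trans (hx.trans (orderOf_dvd_of_pow_eq_one hx')))
    · exact Nat.not_dvd_ordCompl hq hN
        ((Dvd.intro_left _ rfl).trans (hx.trans (orderOf_dvd_of_pow_eq_one hx')))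
  exact (Nat.le_of_dvd hUpos hNU).not_gt hUlt

end

theorem divisibility_implies_EPPO (G : Type*) [Group G] [Finite G]
    (h : ∀ (H : Subgroup G) (d : ℕ), d ∈ elementOrders G → d ≠ 1 →
      Nat.Coprime (Nat.card H) d →
      Nat.card H ∣ Nat.card {g : G // orderOf g = d}) :
    ∀ g : G, g ≠ 1 → IsPrimePow (orderOf g) := by
  intro g hg
  by_contra hpow
  obtain ⟨p, q, hp, hq, hpq, hpqg⟩ :=
    Nat.exists_primes_mul_dvd_of_not_isPrimePow (mt orderOf_eq_one_iff.mp hg) hpow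
  exact not_mul_dvd_orderOf h hp hq hpq g hpqg
end

section
/- If two finite groups G₁ and G₂ are of the same order type (i.e., |{x ∈ G₁ : x^d = 1}| = |{x ∈ G₂ : x^d = 1}| for every positive integer d) and G₁ is nilpotent, then G₂ is nilpotent. -/
/-- Two finite groups are of the same order type if for every positive integer `d`
they have the same number of solutions of `x ^ d = 1`. -/
def SameOrderType (G₁ G₂ : Type*) [Group G₁] [Group G₂] : Prop :=
  ∀ d : ℕ, 0 < d → Nat.card {x : G₁ // x ^ d = 1} = Nat.card {x : G₂ // x ^ d = 1}

/-!
A finite group is nilpotent iff each of its Sylow subgroups is normal. A Sylow `p`-subgroup `P`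
always lies in the set of solutions of `x ^ |P| = 1`, and it is normal iff it fills that set:
a normal `P` contains every element of `p`-power order, and conversely the solution set is closed
under conjugation. So nilpotency is read off from the numbers `|G(p ^ k)|` together with `|G|`,
and `|G| = |G(|G|)|` is itself one of these numbers.
-/

section

variable {G : Type*} [Group G]

lemma card_pow_eq_one_of_card_dvd {n : ℕ} (hn : Nat.card G ∣ n) :
    Nat.card {x : G // x ^ n = 1} = Nat.card G :=
  Nat.card_congr <| Equiv.subtypeUnivEquiv fun x =>
    orderOf_dvd_iff_pow_eq_one.mp ((orderOf_dvd_natCard x).trans hn)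

lemma SameOrderType.card_eq {G₁ G₂ : Type*} [Group G₁] [Group G₂] [Finite G₁] [Finite G₂]
    (h : SameOrderType G₁ G₂) : Nat.card G₁ = Nat.card G₂ := by
  have hd := h (Nat.card G₁ * Nat.card G₂) (Nat.mul_pos Nat.card_pos Nat.card_pos)
  rwa [card_pow_eq_one_of_card_dvd (dvd_mul_right _ _),
    card_pow_eq_one_of_card_dvd (dvd_mul_left _ _)] at hd

lemma Subgroup.normal_of_coe_eq_setOf_pow_eq_one {H : Subgroup G} {n : ℕ}
    (hH : (H : Set G) = {x | x ^ n = 1}) : H.Normal := by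
  refine ⟨fun x hx g => ?_⟩
  rw [← SetLike.mem_coe, hH, Set.mem_ofPred_eq] at hx ⊢
  rw [conj_pow, hx, mul_one, mul_inv_cancel]

namespace Sylow

variable [Finite G] {p : ℕ} [Fact p.Prime]

lemma mem_of_pow_prime_pow_eq_one (P : Sylow p G) [(P : Subgroup G).Normal] {x : G} {k : ℕ}
    (hx : x ^ p ^ k = 1) : x ∈ P := by
  have hpx : IsPGroup p (Subgroup.zpowers x) :=
    IsPGroup.of_card_dvd_pow (Nat.card_zpowers x ▸ orderOf_dvd_of_pow_eq_one hx)
  obtain ⟨Q, hQ⟩ := hpx.exists_le_sylow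
  have : Unique (Sylow p G) := unique_of_normal P ‹_›
  exact Subsingleton.elim Q P ▸ hQ (Subgroup.mem_zpowers x)

theorem normal_iff_card_pow_card_eq_one (P : Sylow p G) :
    (P : Subgroup G).Normal ↔ Nat.card {x : G // x ^ Nat.card P = 1} = Nat.card P := by
  let S : Set G := {x | x ^ Nat.card P = 1}
  have hPS : (P : Set G) ⊆ S := fun x hx =>
    orderOf_dvd_iff_pow_eq_one.mp (Subgroup.orderOf_dvd_natCard _ hx)
  constructor
  · intro hP
    have hSP : S ⊆ P := fun x hx =>
      P.mem_of_pow_prime_pow_eq_one (k := (Nat.card G).factorization p)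
        (P.card_eq_multiplicity ▸ hx)
    exact Nat.card_congr (Equiv.setCongr (hSP.antisymm hPS))
  · intro hcard
    refine Subgroup.normal_of_coe_eq_setOf_pow_eq_one <|
      Set.eq_of_subset_of_ncard_le hPS ?_ S.toFinite
    rw [← Nat.card_coe_set_eq, ← Nat.card_coe_set_eq]
    exact hcard.le

end Sylow

end

theorem same_order_type_nilpotent (G₁ G₂ : Type*) [Group G₁] [Group G₂]
    [Finite G₁] [Finite G₂] (h : SameOrderType G₁ G₂)
    (hnil : Group.IsNilpotent G₁) : Group.IsNilpotent G₂ := by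
  refine (Group.isNilpotent_of_finite_tfae (G := G₂)).out 0 3 |>.mpr ?_
  intro p _ P
  obtain ⟨Q⟩ : Nonempty (Sylow p G₁) := inferInstance
  have hQP : Nat.card Q = Nat.card P := by
    rw [Q.card_eq_multiplicity, P.card_eq_multiplicity, h.card_eq]
  rw [P.normal_iff_card_pow_card_eq_one, ← hQP,
    ← h _ (hQP ▸ Nat.card_pos), ← Q.normal_iff_card_pow_card_eq_one]
  infer_instance
end

section
/- A group G satisfies π_e(G) = π_e(A5) = {1,2,3,5} and |G| = |A5| = 60 if and only if G ≅ A5; in particular, any group of order 60 all of whose element orders lie in {1,2,3,5} and which has elements of orders 2, 3, and 5 is simple. -/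
open Subgroup MulAction

section General

variable {G : Type*} [Group G]

theorem IsPGroup.card_dvd_pow_of_card_eq [Finite G] {p k m : ℕ} [Fact p.Prime]
    {H : Subgroup G} (hH : IsPGroup p H) (hG : Nat.card G = p ^ k * m) (hm : ¬ p ∣ m) :
    Nat.card H ∣ p ^ k := by
  obtain ⟨j, hj⟩ := hH.exists_card_eq
  have hcop : Nat.Coprime (Nat.card H) m := by
    rw [hj]
    exact ((Nat.Prime.coprime_iff_not_dvd Fact.out).2 hm).pow_left j
  exact hcop.dvd_of_dvd_mul_right (hG ▸ H.card_subgroup_dvd_card)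

theorem Sylow.card_eq_pow_of_card_eq [Finite G] {p k m : ℕ} [Fact p.Prime]
    (P : Sylow p G) (hG : Nat.card G = p ^ k * m) (hm : ¬ p ∣ m) : Nat.card P = p ^ k :=
  Nat.dvd_antisymm (P.isPGroup'.card_dvd_pow_of_card_eq hG hm)
    (P.pow_dvd_card_of_pow_dvd_card (hG ▸ dvd_mul_right _ _))

theorem index_centralizer_eq_ncard_orbit (g : G) :
    (centralizer {g}).index = (orbit (ConjAct G) g).ncard := by
  rw [centralizer_eq_comap_stabilizer]
  exact (index_comap_of_surjective _ ConjAct.toConjAct.surjective).trans (index_stabilizer _ _)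

theorem Subgroup.Normal.index_centralizer_lt_card [Finite G] {N : Subgroup G} (hN : N.Normal)
    {g : G} (hg : g ∈ N) (hg1 : g ≠ 1) : (centralizer {g}).index < Nat.card N := by
  have h1 : (1 : G) ∉ orbit (ConjAct G) g := fun h =>
    hg1 (isConj_one_left.1 (ConjAct.mem_orbit_conjAct.1 h).symm)
  have hsub : insert 1 (orbit (ConjAct G) g) ⊆ N := by
    rintro x (rfl | hx)
    · exact N.one_mem
    · obtain ⟨c, hc⟩ := isConj_iff.1 (ConjAct.mem_orbit_conjAct.1 hx).symm
      exact hc ▸ hN.conj_mem g hg c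
  rw [index_centralizer_eq_ncard_orbit, Nat.lt_iff_add_one_le, ← Set.ncard_insert_of_notMem h1,
    ← Nat.card_coe_set_eq]
  exact Set.ncard_le_ncard hsub

theorem mem_centralizer_of_mem_normalizer_of_card_lt {T : Subgroup G} [Finite T] {p : ℕ}
    (hp : p.Prime) {x : G} (hx : x ∈ normalizer (T : Set G)) (hxp : orderOf x = p)
    (hT : Nat.card T < p) : x ∈ centralizer (T : Set G) := by
  set φ := (MulAut.toPerm T).comp T.normalizerMonoidHom
  have hdvd_p : orderOf (φ ⟨x, hx⟩) ∣ p :=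
    hxp ▸ (orderOf_map_dvd φ _).trans (Subgroup.orderOf_mk x hx).dvd
  have hdvd_fact : orderOf (φ ⟨x, hx⟩) ∣ (Nat.card T).factorial :=
    Nat.card_perm (α := T) ▸ orderOf_dvd_natCard _
  have hφ : φ ⟨x, hx⟩ = 1 := by
    rw [← orderOf_eq_one_iff]
    exact Nat.eq_one_of_dvd_coprimes ((hp.coprime_iff_not_dvd).2
      (fun h => hT.not_ge ((hp.dvd_factorial).1 h))) hdvd_p hdvd_fact
  have hker : (⟨x, hx⟩ : normalizer (T : Set G)) ∈ T.normalizerMonoidHom.ker :=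
    MulEquiv.ext fun t => Equiv.congr_fun hφ t
  rw [normalizerMonoidHom_ker] at hker
  exact hker

theorem nonempty_mulEquiv_alternatingGroup_of_injective [Finite G] {α : Type*} [Fintype α]
    [DecidableEq α]    (f : G →* Equiv.Perm α) (hf : Function.Injective f)
    (hcard : 2 * Nat.card G = Nat.card (Equiv.Perm α)) :
    Nonempty (G ≃* alternatingGroup α) := by
  have hindex : f.range.index = 2 := by
    have h := card_mul_index f.range
    rw [← Nat.card_congr (MonoidHom.ofInjective hf).toEquiv, ← hcard, mul_comm 2] at h
    exact Nat.eq_of_mul_eq_mul_left Nat.card_pos h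
  exact ⟨(MonoidHom.ofInjective hf).trans
    (MulEquiv.subgroupCongr (Equiv.Perm.eq_alternatingGroup_of_index_eq_two hindex))⟩

theorem elementOrders_congr {H : Type*} [Group H] (e : G ≃* H) :
    elementOrders G = elementOrders H := by
  ext n
  exact ⟨fun ⟨g, hg⟩ => ⟨e g, (e.orderOf_eq g).trans hg⟩,
    fun ⟨h, hh⟩ => ⟨e.symm h, (e.symm.orderOf_eq h).trans hh⟩⟩

end General

section OrdersOneTwoThreeFive

variable {G : Type*} [Group G]

theorem orderOf_prime_of_ne_one (hord : elementOrders G ⊆ {1, 2, 3, 5})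
    {g : G} (hg : g ≠ 1) : (orderOf g).Prime := by
  rcases hord ⟨g, rfl⟩ with h | h | h | h
  · exact absurd (orderOf_eq_one_iff.1 h) hg
  all_goals rw [h]; norm_num

theorem isPGroup_centralizer_of_orderOf_mem (hord : elementOrders G ⊆ {1, 2, 3, 5})
    {g : G} (hg : g ≠ 1) : IsPGroup (orderOf g) (centralizer {g}) := by
  have key : ∀ a ∈ ({1, 2, 3, 5} : Set ℕ), ∀ b ∈ ({1, 2, 3, 5} : Set ℕ),
      a ≠ 1 → ¬ b ∣ a → a.Coprime b ∧ a * b ∉ ({1, 2, 3, 5} : Set ℕ) := by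
    simp only [Set.mem_insert_iff, Set.mem_singleton_iff]
    rintro a (rfl | rfl | rfl | rfl) b (rfl | rfl | rfl | rfl) <;> decide
  refine isPGroup_iff_orderOf_dvd_pow.2 fun ⟨x, hx⟩ => ⟨1, ?_⟩
  rw [Subgroup.orderOf_mk, pow_one]
  by_contra hndvd
  obtain ⟨hcop, hprod⟩ :=
    key _ (hord ⟨g, rfl⟩) _ (hord ⟨x, rfl⟩) (mt orderOf_eq_one_iff.1 hg) hndvd
  have hcomm : Commute g x := (mem_centralizer_singleton_iff.1 hx).symm
  exact hprod (hcomm.orderOf_mul_eq_mul_orderOf_of_coprime hcop ▸ hord ⟨g * x, rfl⟩)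

variable [Finite G]

theorem dvd_index_centralizer_of_orderOf_mem (hord : elementOrders G ⊆ {1, 2, 3, 5})
    {g : G} (hg : g ≠ 1) {k m : ℕ} (hG : Nat.card G = orderOf g ^ k * m)
    (hm : ¬ orderOf g ∣ m) : m ∣ (centralizer {g}).index := by
  have : Fact (orderOf g).Prime := ⟨orderOf_prime_of_ne_one hord hg⟩
  obtain ⟨d, hd⟩ := (isPGroup_centralizer_of_orderOf_mem hord hg).card_dvd_pow_of_card_eq hG hm
  have h := card_mul_index (centralizer {g})
  rw [hG, hd, mul_assoc] at h
  exact Dvd.intro_left d (Nat.eq_of_mul_eq_mul_left Nat.card_pos h).symm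

theorem twelve_le_index_centralizer (hord : elementOrders G ⊆ {1, 2, 3, 5})
    (hG : Nat.card G = 60) {g : G} (hg : g ≠ 1) : 12 ≤ (centralizer {g}).index := by
  have hle : ∀ m, 12 ≤ m → m ∣ (centralizer {g}).index → 12 ≤ (centralizer {g}).index :=
    fun m hm hdvd => hm.trans (Nat.le_of_dvd (Nat.pos_of_ne_zero index_ne_zero_of_finite) hdvd)
  rcases hord ⟨g, rfl⟩ with h | h | h | h
  · exact absurd (orderOf_eq_one_iff.1 h) hg
  · exact hle 15 (by norm_num) <| dvd_index_centralizer_of_orderOf_mem hord hg (k := 2)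
      (by rw [hG, h]; rfl) (by rw [h]; norm_num)
  · exact hle 20 (by norm_num) <| dvd_index_centralizer_of_orderOf_mem hord hg (k := 1)
      (by rw [hG, h]; rfl) (by rw [h]; norm_num)
  · exact hle 12 le_rfl <| dvd_index_centralizer_of_orderOf_mem hord hg (k := 1)
      (by rw [hG, h]; rfl) (by rw [h]; norm_num)

theorem twenty_le_index_centralizer (hord : elementOrders G ⊆ {1, 2, 3, 5})
    (hG : Nat.card G = 60) {g : G} (hg : orderOf g = 3) : 20 ≤ (centralizer {g}).index :=
  Nat.le_of_dvd (Nat.pos_of_ne_zero index_ne_zero_of_finite) <|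
    dvd_index_centralizer_of_orderOf_mem hord (by rintro rfl; simp at hg) (k := 1)
      (by rw [hG, hg]; rfl) (by rw [hg]; norm_num)

theorem card_sylow_two (hG : Nat.card G = 60) (P : Sylow 2 G) : Nat.card P = 4 :=
  P.card_eq_pow_of_card_eq (k := 2) (m := 15) hG (by norm_num)

theorem not_five_dvd_card_normalizer_sylow_two
    (hord : elementOrders G ⊆ {1, 2, 3, 5}) (hG : Nat.card G = 60) (P : Sylow 2 G) :
    ¬ 5 ∣ Nat.card (normalizer (P : Set G)) := by
  intro h5
  have : Fact (Nat.Prime 5) := ⟨by norm_num⟩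
  obtain ⟨⟨x, hxN⟩, hx⟩ := exists_prime_orderOf_dvd_card' 5 h5
  rw [Subgroup.orderOf_mk] at hx
  have hxC := mem_centralizer_of_mem_normalizer_of_card_lt (by norm_num) hxN hx
    (by rw [card_sylow_two hG P]; norm_num)
  obtain ⟨t, htP, ht1⟩ := (P : Subgroup G).bot_or_exists_ne_one.resolve_left fun h => by
    simpa [h] using card_sylow_two hG P
  have htx : t ∈ centralizer {x} := mem_centralizer_singleton_iff.2 (hxC t htP)
  have hC : IsPGroup 5 (centralizer {x}) :=
    hx ▸ isPGroup_centralizer_of_orderOf_mem hord (by rintro rfl; simp at hx)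
  have h5t : 5 ∣ orderOf t := by
    simpa using hC.dvd_orderOf (g := ⟨t, htx⟩) (by simpa using ht1)
  have ht4 : orderOf t ∣ 4 := card_sylow_two hG P ▸ Subgroup.orderOf_dvd_natCard _ htP
  exact absurd (h5t.trans ht4) (by norm_num)

theorem sylow_two_not_normalizer_le_centralizer
    (hord : elementOrders G ⊆ {1, 2, 3, 5}) (hG : Nat.card G = 60) (P : Sylow 2 G) :
    ¬ normalizer (P : Set G) ≤ centralizer (P : Set G) := by
  intro hP
  set K := (MonoidHom.transferSylow P hP).ker
  have : Fact (Nat.Prime 3) := ⟨by norm_num⟩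
  obtain ⟨y, hy⟩ := exists_prime_orderOf_dvd_card' (G := G) 3 (by rw [hG]; norm_num)
  have hyK : y ∈ K := by
    rw [MonoidHom.mem_ker, ← orderOf_eq_one_iff]
    refine Nat.eq_one_of_dvd_coprimes (a := 3) (b := 4) (by norm_num) ?_ ?_
    · exact hy ▸ orderOf_map_dvd _ y
    · exact card_sylow_two hG P ▸ orderOf_dvd_natCard _
  have hK : Nat.card K ≤ 15 := by
    have h60 : Nat.card K ∣ 60 := hG ▸ K.card_subgroup_dvd_card
    have key : ∀ d ≤ 60, d ∣ 60 → ¬ 2 ∣ d → d ≤ 15 := by decide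
    exact key _ (Nat.le_of_dvd (by norm_num) h60) h60
      (MonoidHom.not_dvd_card_ker_transferSylow P hP)
  have h1 : (centralizer {y}).index < Nat.card K :=
    (MonoidHom.normal_ker _).index_centralizer_lt_card hyK (by rintro rfl; simp at hy)
  have h2 := twenty_le_index_centralizer hord hG hy
  omega

theorem card_normalizer_sylow_two (hord : elementOrders G ⊆ {1, 2, 3, 5})
    (hG : Nat.card G = 60) (P : Sylow 2 G) : Nat.card (normalizer (P : Set G)) = 12 := by
  have hle : (P : Subgroup G) ≤ normalizer (P : Set G) := le_normalizer
  have h4 : 4 ∣ Nat.card (normalizer (P : Set G)) := card_sylow_two hG P ▸ card_dvd_of_le hle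
  have h60 : Nat.card (normalizer (P : Set G)) ∣ 60 := hG ▸ card_subgroup_dvd_card _
  have h5 := not_five_dvd_card_normalizer_sylow_two hord hG P
  have key : ∀ d ≤ 60, d ∣ 60 → 4 ∣ d → ¬ 5 ∣ d → d = 4 ∨ d = 12 := by decide
  refine (key _ (Nat.le_of_dvd (by norm_num) h60) h60 h4 h5).resolve_left fun hN => ?_
  have hNP : normalizer (P : Set G) = P :=
    (eq_of_le_of_card_ge hle (by rw [hN, card_sylow_two hG P])).symm
  have : IsMulCommutative P :=
    IsPGroup.isMulCommutative_of_card_eq_prime_sq (p := 2) (card_sylow_two hG P)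
  exact sylow_two_not_normalizer_le_centralizer hord hG P (hNP ▸ le_centralizer _)

theorem toPermHom_injective_of_card_eq_twelve
    (hord : elementOrders G ⊆ {1, 2, 3, 5}) (hG : Nat.card G = 60)
    {H : Subgroup G} (hH : Nat.card H = 12) : Function.Injective (toPermHom G (G ⧸ H)) := by
  rw [← MonoidHom.ker_eq_bot_iff, ← normalCore_eq_ker]
  refine H.normalCore.bot_or_exists_ne_one.resolve_right fun ⟨k, hk, hk1⟩ => ?_
  have h1 := H.normalCore_normal.index_centralizer_lt_card hk hk1
  have h2 := twelve_le_index_centralizer hord hG hk1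
  have h3 : Nat.card H.normalCore ≤ 12 := hH ▸ card_le_of_le H.normalCore_le
  omega

theorem nonempty_mulEquiv_alternatingGroup_five
    (hord : elementOrders G ⊆ {1, 2, 3, 5}) (hG : Nat.card G = 60) :
    Nonempty (G ≃* alternatingGroup (Fin 5)) := by
  have : Fact (Nat.Prime 2) := ⟨Nat.prime_two⟩
  obtain ⟨P⟩ : Nonempty (Sylow 2 G) := inferInstance
  set H := normalizer (P : Set G)
  have hH : Nat.card H = 12 := card_normalizer_sylow_two hord hG P
  have hindex : H.index = 5 := by
    have h := card_mul_index H
    rw [hH, hG] at h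
    omega
  set e := (Finite.equivFinOfCardEq (α := G ⧸ H) hindex).permCongrHom
  refine nonempty_mulEquiv_alternatingGroup_of_injective
    (e.toMonoidHom.comp (toPermHom G (G ⧸ H)))
    (e.injective.comp (toPermHom_injective_of_card_eq_twelve hord hG hH)) ?_
  rw [hG, Nat.card_perm, Nat.card_fin]
  rfl

theorem elementOrders_eq_of_card_eq_sixty (hord : elementOrders G ⊆ {1, 2, 3, 5})
    (hG : Nat.card G = 60) : elementOrders G = {1, 2, 3, 5} := by
  refine hord.antisymm ?_
  have hp : ∀ p : ℕ, p.Prime → p ∣ 60 → p ∈ elementOrders G := fun p hp hdvd =>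
    have : Fact p.Prime := ⟨hp⟩
    exists_prime_orderOf_dvd_card' p (hG ▸ hdvd)
  rintro n (rfl | rfl | rfl | rfl)
  · exact ⟨1, orderOf_one⟩
  all_goals exact hp _ (by norm_num) (by norm_num)

end OrdersOneTwoThreeFive

theorem card_alternatingGroup_five : Nat.card (alternatingGroup (Fin 5)) = 60 := by
  rw [nat_card_alternatingGroup, Nat.card_fin]
  rfl

set_option maxRecDepth 10000 in
theorem elementOrders_alternatingGroup_five_subset :
    elementOrders (alternatingGroup (Fin 5)) ⊆ {1, 2, 3, 5} := by
  rintro _ ⟨σ, rfl⟩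
  have hpow : ∀ τ : Equiv.Perm (Fin 5), Equiv.Perm.sign τ = 1 →
      τ ^ 2 = 1 ∨ τ ^ 3 = 1 ∨ τ ^ 5 = 1 := by decide
  have hprime : ∀ p : ℕ, p.Prime → (σ : Equiv.Perm (Fin 5)) ^ p = 1 →
      orderOf σ = 1 ∨ orderOf σ = p :=
    fun p hp h => (Nat.dvd_prime hp).1 (Subgroup.orderOf_coe σ ▸ orderOf_dvd_of_pow_eq_one h)
  rcases hpow σ σ.2 with h | h | h
  · rcases hprime 2 (by norm_num) h with h' | h' <;> simp [h']
  · rcases hprime 3 (by norm_num) h with h' | h' <;> simp [h']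
  · rcases hprime 5 (by norm_num) h with h' | h' <;> simp [h']

theorem A5_two_orders_characterization (G : Type*) [Group G] [Finite G] :
    ((elementOrders G = {1, 2, 3, 5} ∧ Nat.card G = 60) ↔
        Nonempty (G ≃* alternatingGroup (Fin 5))) ∧
      ((Nat.card G = 60 ∧ (∀ g : G, orderOf g ∈ ({1, 2, 3, 5} : Set ℕ)) ∧
          (∃ g : G, orderOf g = 2) ∧ (∃ g : G, orderOf g = 3) ∧
          (∃ g : G, orderOf g = 5)) → IsSimpleGroup G) := by
  refine ⟨⟨fun ⟨hset, hG⟩ => ?_, fun ⟨e⟩ => ?_⟩, fun ⟨hG, hord, _⟩ => ?_⟩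
  · exact nonempty_mulEquiv_alternatingGroup_five hset.subset hG
  · refine ⟨(elementOrders_congr e).trans ?_,
      (Nat.card_congr e.toEquiv).trans card_alternatingGroup_five⟩
    exact elementOrders_eq_of_card_eq_sixty elementOrders_alternatingGroup_five_subset
      card_alternatingGroup_five
  · obtain ⟨e⟩ :=
      nonempty_mulEquiv_alternatingGroup_five (fun _ ⟨g, hg⟩ => hg ▸ hord g) hG
    exact e.isSimpleGroup
end
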